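/- arXiv:2210.01744 — 3 statements merged into one kernel-verified Lean document; each statement's English description precedes it below -/
import Mathlib

section
/- For a double integrator with bounds a_min = -1, a_max = 1, given initial state (0, v_I) and goal velocity v_G, and any prescribed duration t_w with t_w ≥ |v_G − v_I|, and any displacement d satisfying the reachability bounds (the displacement achieved by a two-piece control with a₁ = 1, a₂ = −1 at the maximal switching time is an upper bound, and with a₁ = −1, a₂ = 1 a lower bound), there exist a₁, a₂ ∈ [−1,1] and t₁ ∈ [0, t_w] with t₂ = t_w − t₁ such that the two-piece control ((a₁,t₁),(a₂,t₂)) satisfies a₁ t₁ + a₂ t₂ = v_G − v_I and v_I t₁ + a₁ t₁²/2 + (v_I + a₁ t₁)t₂ + a₂ t₂²/2 = d. Concretely: the set of displacements achievable in exactly time t_w while ending with velocity v_G is a closed interval [D_min(t_w), D_max(t_w)] where D_max(t_w) = v_I t_w + t_w²/2 − (v_I + t_w − v_G)²/4 and D_min(t_w) = v_I t_w − t_w²/2 + (v_G − v_I + t_w)²/4, and every d in this interval is achieved by some two-piece control. -/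
/-!
Once the final velocity is pinned to `vG`, the displacement of a two-piece control is affine
in the switching time: `D = vI tw + Δ tw / 2 + t₁ (a₁ tw - Δ) / 2` with `Δ = vG - vI`.
With `a₁ = 1` and `t₁` running over `[0, (tw + Δ)/2]` it sweeps the upper half of
`[D_min, D_max]`, the second acceleration being forced by the velocity constraint; the lower
half is the mirror image under `(vI, vG, d, a₁, a₂) ↦ -(vI, vG, d, a₁, a₂)`.
-/

noncomputable def twoPieceDisplacement (vI a₁ a₂ t₁ t₂ : ℝ) : ℝ :=
  vI * t₁ + a₁ * t₁ ^ 2 / 2 + (vI + a₁ * t₁) * t₂ + a₂ * t₂ ^ 2 / 2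

lemma twoPieceDisplacement_neg (vI a₁ a₂ t₁ t₂ : ℝ) :
    twoPieceDisplacement (-vI) (-a₁) (-a₂) t₁ t₂ = -twoPieceDisplacement vI a₁ a₂ t₁ t₂ := by
  unfold twoPieceDisplacement
  ring

lemma twoPieceDisplacement_eq_of_velocity {vI Δ tw a₁ a₂ t₁ : ℝ}
    (hv : a₁ * t₁ + a₂ * (tw - t₁) = Δ) :
    twoPieceDisplacement vI a₁ a₂ t₁ (tw - t₁) = vI * tw + Δ * tw / 2 + t₁ * (a₁ * tw - Δ) / 2 := by
  unfold twoPieceDisplacement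
  linear_combination (tw - t₁) / 2 * hv

lemma exists_abs_le_one_mul_eq {x s : ℝ} (h : |x| ≤ s) : ∃ a : ℝ, |a| ≤ 1 ∧ a * s = x := by
  rcases (abs_nonneg x |>.trans h).eq_or_lt with hs | hs
  · exact ⟨0, by simp, by simpa [← hs, eq_comm] using h⟩
  · refine ⟨x / s, ?_, div_mul_cancel₀ x hs.ne'⟩
    rwa [abs_div, abs_of_pos hs, div_le_one hs]

lemma exists_twoPiece_of_mid_le {vI vG tw d : ℝ} (htw : |vG - vI| ≤ tw)
    (hmid : vI * tw + (vG - vI) * tw / 2 ≤ d)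
    (hDmax : d ≤ vI * tw + tw ^ 2 / 2 - (vI + tw - vG) ^ 2 / 4) :
    ∃ a₁ a₂ t₁ : ℝ, |a₁| ≤ 1 ∧ |a₂| ≤ 1 ∧ 0 ≤ t₁ ∧ t₁ ≤ tw ∧
      a₁ * t₁ + a₂ * (tw - t₁) = vG - vI ∧ twoPieceDisplacement vI a₁ a₂ t₁ (tw - t₁) = d := by
  set Δ := vG - vI
  obtain ⟨hΔlo, hΔhi⟩ := abs_le.mp htw
  obtain ⟨t₁, ⟨ht₁0, ht₁max⟩, hdisp⟩ :
      ∃ t₁ ∈ Set.Icc 0 ((tw + Δ) / 2), vI * tw + Δ * tw / 2 + t₁ * (1 * tw - Δ) / 2 = d := by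
    refine intermediate_value_Icc (by linarith) (by fun_prop) ⟨by linarith, ?_⟩
    linear_combination hDmax
  obtain ⟨a₂, ha₂, hv₂⟩ : ∃ a₂ : ℝ, |a₂| ≤ 1 ∧ a₂ * (tw - t₁) = Δ - 1 * t₁ :=
    exists_abs_le_one_mul_eq (abs_le.mpr ⟨by linarith, by linarith⟩)
  have hv : 1 * t₁ + a₂ * (tw - t₁) = Δ := by linarith
  exact ⟨1, a₂, t₁, by simp, ha₂, ht₁0, by linarith, hv,
    (twoPieceDisplacement_eq_of_velocity hv).trans hdisp⟩

/-- Reachable displacements at a prescribed time: for the unit double integrator from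
`(0, vI)`, any duration `tw ≥ |vG - vI|`, and any displacement `d` in the closed
interval `[D_min(tw), D_max(tw)]`, some two-piece control `((a₁,t₁),(a₂,t₂))` with
`|a₁|,|a₂| ≤ 1`, `t₁ + t₂ = tw`, ends with velocity `vG` and displacement `d`. -/
theorem two_piece_reachable_interval
    (vI vG tw d : ℝ)
    (htw : |vG - vI| ≤ tw)
    (hDmin : vI * tw - tw ^ 2 / 2 + (vG - vI + tw) ^ 2 / 4 ≤ d)
    (hDmax : d ≤ vI * tw + tw ^ 2 / 2 - (vI + tw - vG) ^ 2 / 4) :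
    ∃ a₁ a₂ t₁ : ℝ, |a₁| ≤ 1 ∧ |a₂| ≤ 1 ∧ 0 ≤ t₁ ∧ t₁ ≤ tw ∧
      a₁ * t₁ + a₂ * (tw - t₁) = vG - vI ∧
      vI * t₁ + a₁ * t₁ ^ 2 / 2 + (vI + a₁ * t₁) * (tw - t₁)
        + a₂ * (tw - t₁) ^ 2 / 2 = d := by
  rcases le_total (vI * tw + (vG - vI) * tw / 2) d with hmid | hmid
  · exact exists_twoPiece_of_mid_le htw hmid hDmax
  · obtain ⟨a₁, a₂, t₁, ha₁, ha₂, ht₁0, ht₁tw, hv, hdisp⟩ :=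
      exists_twoPiece_of_mid_le (vI := -vI) (vG := -vG) (tw := tw) (d := -d)
        (by rwa [← abs_neg, neg_sub_neg, neg_sub]) (by linarith) (by linear_combination hDmin)
    refine ⟨-a₁, -a₂, t₁, by rwa [abs_neg], by rwa [abs_neg], ht₁0, ht₁tw, by linarith, ?_⟩
    show twoPieceDisplacement vI (-a₁) (-a₂) t₁ (tw - t₁) = d
    rw [← neg_neg vI, twoPieceDisplacement_neg, hdisp, neg_neg]
end

section
/- Let n intervals be given, where double integrator i has optimal time t*_i ≥ 0 and a (possibly empty) gap interval (L_i, M_i) with t*_i ≤ L_i ≤ M_i; integrator i can reach its goal at exactly time t iff t ≥ t*_i and t ∉ (L_i, M_i). Then the set S = {t : ∀ i, t ≥ t*_i and t ∉ (L_i, M_i)} of common feasible times is nonempty and has a minimum, and this minimum belongs to the finite set {t*_1,…,t*_n} ∪ {M_1,…,M_n}. -/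
/-- Optimal common waiting time: each of `n ≥ 1` double integrators has feasible-time
set `[t*_i, L_i] ∪ [M_i, ∞)` (gap interval `(L_i, M_i)`).  The set of common feasible
times is nonempty, has a minimum, and the minimum is one of the `t*_i` or `M_i`. -/
theorem optimal_waiting_time_exists
    (n : ℕ) (hn : 0 < n)
    (tstar L M : Fin n → ℝ)
    (h1 : ∀ i, 0 ≤ tstar i) (h2 : ∀ i, tstar i ≤ L i) (h3 : ∀ i, L i ≤ M i) :
    ∃ t ∈ {t : ℝ | ∀ i, tstar i ≤ t ∧ t ∉ Set.Ioo (L i) (M i)},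
      (∀ s ∈ {t : ℝ | ∀ i, tstar i ≤ t ∧ t ∉ Set.Ioo (L i) (M i)}, t ≤ s) ∧
      (∃ i, t = tstar i ∨ t = M i) := by
  classical
  have hne : Nonempty (Fin n) := ⟨⟨0, hn⟩⟩
  set S := {t : ℝ | ∀ i, tstar i ≤ t ∧ t ∉ Set.Ioo (L i) (M i)} with hS
  set F : Finset ℝ := (Finset.univ.image tstar) ∪ (Finset.univ.image M) with hF
  set T : Finset ℝ := F.filter (· ∈ S) with hT
  -- the max of the M i is in S and is a candidate
  have hMne : (Finset.univ.image M).Nonempty := ⟨M ⟨0, hn⟩, Finset.mem_image_of_mem _ (Finset.mem_univ _)⟩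
  set m0 := (Finset.univ.image M).max' hMne with hm0
  have hm0S : m0 ∈ S := by
    intro i
    have hMi : M i ≤ m0 :=
      Finset.le_max' _ _ (Finset.mem_image_of_mem _ (Finset.mem_univ i))
    refine ⟨le_trans (le_trans (h2 i) (h3 i)) hMi, ?_⟩
    intro hmem
    exact absurd hMi (not_le.mpr hmem.2)
  have hm0F : m0 ∈ F := by
    obtain ⟨i, _, hi⟩ := Finset.mem_image.mp ((Finset.univ.image M).max'_mem hMne)
    exact Finset.mem_union_right _ (Finset.mem_image.mpr ⟨i, Finset.mem_univ i, hi⟩)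
  have hTne : T.Nonempty := ⟨m0, Finset.mem_filter.mpr ⟨hm0F, hm0S⟩⟩
  -- key: every s ∈ S dominates some candidate in T
  have key : ∀ s ∈ S, ∃ c ∈ T, c ≤ s := by
    intro s hs
    set a : Fin n → ℝ := fun i => if M i ≤ s then M i else tstar i with ha
    have hane : (Finset.univ.image a).Nonempty := ⟨a ⟨0, hn⟩, Finset.mem_image_of_mem _ (Finset.mem_univ _)⟩
    set c := (Finset.univ.image a).max' hane with hc
    have hcle : c ≤ s := by
      apply Finset.max'_le
      intro y hy
      obtain ⟨i, _, rfl⟩ := Finset.mem_image.mp hy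
      by_cases h : M i ≤ s
      · simpa [ha, h]
      · simpa [ha, h] using (hs i).1
    have hac : ∀ i, a i ≤ c := fun i =>
      Finset.le_max' _ _ (Finset.mem_image_of_mem _ (Finset.mem_univ i))
    have hcS : c ∈ S := by
      intro j
      constructor
      · refine le_trans ?_ (hac j)
        by_cases h : M j ≤ s
        · simpa [ha, h] using le_trans (h2 j) (h3 j)
        · simp [ha, h]
      · rintro ⟨hL, hM⟩
        rcases (hs j).2 |> fun hgap => (by
          rcases lt_or_ge (L j) s with hls | hls
          · rcases lt_or_ge s (M j) with hsm | hsm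
            · exact absurd ⟨hls, hsm⟩ hgap
            · exact Or.inr hsm
          · exact Or.inl hls : s ≤ L j ∨ M j ≤ s) with hsl | hms
        · exact absurd (lt_of_lt_of_le hL (le_trans hcle hsl)) (lt_irrefl _)
        · have : a j = M j := by simp [ha, hms]
          exact absurd (lt_of_le_of_lt (this ▸ hac j) hM) (lt_irrefl _)
    have hcF : c ∈ F := by
      obtain ⟨i, _, hi⟩ := Finset.mem_image.mp ((Finset.univ.image a).max'_mem hane)
      by_cases h : M i ≤ s
      · exact Finset.mem_union_right _ (Finset.mem_image.mpr ⟨i, Finset.mem_univ i, by simpa [ha, h] using hi⟩)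
      · exact Finset.mem_union_left _ (Finset.mem_image.mpr ⟨i, Finset.mem_univ i, by simpa [ha, h] using hi⟩)
    exact ⟨c, Finset.mem_filter.mpr ⟨hcF, hcS⟩, hcle⟩
  refine ⟨T.min' hTne, ?_, ?_, ?_⟩
  · exact (Finset.mem_filter.mp (T.min'_mem hTne)).2
  · intro s hs
    obtain ⟨c, hcT, hcs⟩ := key s hs
    exact le_trans (Finset.min'_le _ _ hcT) hcs
  · have := (Finset.mem_filter.mp (T.min'_mem hTne)).1
    rcases Finset.mem_union.mp this with h | h
    · obtain ⟨i, _, hi⟩ := Finset.mem_image.mp h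
      exact ⟨i, Or.inl hi.symm⟩
    · obtain ⟨i, _, hi⟩ := Finset.mem_image.mp h
      exact ⟨i, Or.inr hi.symm⟩
end

section
/- Concatenation of bang-bang transforms: given a piecewise-linear path with vertices q⁰, q¹, …, q^k in ℝⁿ, the concatenation of the bang-bang transforms of each edge is an admissible control (‖a(t)‖_∞ ≤ 1 at all times) that steers the n-dimensional double integrator from (q⁰, 0) to (q^k, 0), and the configuration component of the resulting trajectory is exactly the image of the piecewise-linear path. Consequently, if every segment [qʲ, qʲ⁺¹] lies in an open set C_free ⊆ ℝⁿ, then the full state trajectory lies in X_free = {(q, v) : q ∈ C_free}. -/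
/-!
Traverse edge `j` during the time interval `[j, j + 1]` by the bang-bang profile `σ` (acceleration
`4` for half a unit of time, then `-4`), so that the position at time `u` is
`p 0 + ∑ⱼ σ (u - j) • (p (j + 1) - p j)`. Since `σ = 0` before and `σ = 1` after `[0, 1]`, at a
time in `[m, m + 1]` the sum telescopes to `p m + σ (u - m) • (p (m + 1) - p m)`, a point of the
`m`-th segment, and every point of it is reached because `σ` is continuous. At most one edge
accelerates at a time, so slowing time down by the factor `S = 1 + L`, `L` the length of the path,
makes the acceleration at most `4 L / S² ≤ 1` in norm.
-/

open Set

theorem hasDerivAt_max_zero {x : ℝ} (hx : x ≠ 0) :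
    HasDerivAt (fun y : ℝ => max y 0) (if 0 < x then 1 else 0) x := by
  rcases hx.lt_or_gt with hx | hx
  · rw [if_neg hx.not_gt]
    refine (hasDerivAt_const x 0).congr_of_eventuallyEq ?_
    filter_upwards [eventually_lt_nhds hx] with y hy using max_eq_right hy.le
  · rw [if_pos hx]
    refine (hasDerivAt_id x).congr_of_eventuallyEq ?_
    filter_upwards [eventually_gt_nhds hx] with y hy using max_eq_left hy.le

theorem hasDerivAt_max_zero_sq (x : ℝ) :
    HasDerivAt (fun y : ℝ => max y 0 ^ 2) (2 * max x 0) x := by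
  refine hasDerivAt_of_hasDerivAt_of_ne' (x := 0) (g := fun y => 2 * max y 0) (fun y hy => ?_)
    (by fun_prop) (by fun_prop) x
  refine ((hasDerivAt_max_zero hy).fun_pow 2).congr_deriv ?_
  rcases hy.lt_or_gt with hy | hy
  · simp [hy.not_gt, max_eq_right hy.le]
  · simp [hy]

/-- `(max u 0) ^ 2 / 2` is the second antiderivative of the Heaviside step, so this is the motion
from rest at `0` to rest at `1` with acceleration `4` on `[0, 1/2]` and `-4` on `[1/2, 1]`. -/
noncomputable def bangBangPos (u : ℝ) : ℝ :=
  2 * (max u 0 ^ 2 - 2 * max (u - 1 / 2) 0 ^ 2 + max (u - 1) 0 ^ 2)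

noncomputable def bangBangVel (u : ℝ) : ℝ :=
  4 * (max u 0 - 2 * max (u - 1 / 2) 0 + max (u - 1) 0)

noncomputable def bangBangAcc (u : ℝ) : ℝ :=
  4 * ((if 0 < u then 1 else 0) - 2 * (if 0 < u - 1 / 2 then 1 else 0) +
    (if 0 < u - 1 then 1 else 0))

theorem hasDerivAt_bangBangPos (u : ℝ) : HasDerivAt bangBangPos (bangBangVel u) u := by
  have h := (((hasDerivAt_max_zero_sq u).sub
    (((hasDerivAt_max_zero_sq (u - 1 / 2)).comp_sub_const u (1 / 2)).const_mul 2)).add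
    ((hasDerivAt_max_zero_sq (u - 1)).comp_sub_const u 1)).const_mul 2
  refine h.congr_deriv ?_
  rw [bangBangVel]; ring

theorem hasDerivAt_bangBangVel {u : ℝ} (h₀ : u ≠ 0) (h₁ : u ≠ 1 / 2) (h₂ : u ≠ 1) :
    HasDerivAt bangBangVel (bangBangAcc u) u :=
  (((hasDerivAt_max_zero h₀).sub
    (((hasDerivAt_max_zero (sub_ne_zero.2 h₁)).comp_sub_const u (1 / 2)).const_mul 2)).add
    ((hasDerivAt_max_zero (sub_ne_zero.2 h₂)).comp_sub_const u 1)).const_mul 4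

@[fun_prop]
theorem continuous_bangBangPos : Continuous bangBangPos := by
  unfold bangBangPos; fun_prop

@[fun_prop]
theorem continuous_bangBangVel : Continuous bangBangVel := by
  unfold bangBangVel; fun_prop

theorem bangBangPos_of_nonpos {u : ℝ} (hu : u ≤ 0) : bangBangPos u = 0 := by
  rw [bangBangPos, max_eq_right hu, max_eq_right (by linarith), max_eq_right (by linarith)]
  ring

theorem bangBangPos_of_one_le {u : ℝ} (hu : 1 ≤ u) : bangBangPos u = 1 := by
  rw [bangBangPos, max_eq_left (by linarith), max_eq_left (by linarith), max_eq_left (by linarith)]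
  ring

theorem bangBangVel_of_nonpos {u : ℝ} (hu : u ≤ 0) : bangBangVel u = 0 := by
  rw [bangBangVel, max_eq_right hu, max_eq_right (by linarith), max_eq_right (by linarith)]
  ring

theorem bangBangVel_of_one_le {u : ℝ} (hu : 1 ≤ u) : bangBangVel u = 0 := by
  rw [bangBangVel, max_eq_left (by linarith), max_eq_left (by linarith), max_eq_left (by linarith)]
  ring

theorem bangBangPos_mem_Icc (u : ℝ) : bangBangPos u ∈ Icc 0 1 := by
  rcases le_total u 0 with hu | hu
  · simp [bangBangPos_of_nonpos hu]
  rcases le_total 1 u with hu' | hu'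
  · simp [bangBangPos_of_one_le hu']
  rcases le_total u (1 / 2) with h | h
  · rw [bangBangPos, max_eq_left hu, max_eq_right (by linarith), max_eq_right (by linarith)]
    constructor <;> nlinarith
  · rw [bangBangPos, max_eq_left hu, max_eq_left (by linarith), max_eq_right (by linarith)]
    constructor <;> nlinarith

theorem abs_bangBangAcc_le (u : ℝ) : |bangBangAcc u| ≤ 4 := by
  unfold bangBangAcc; split_ifs <;> norm_num <;> linarith

theorem mem_Ioc_of_bangBangAcc_ne_zero {u : ℝ} (hu : bangBangAcc u ≠ 0) : u ∈ Ioc 0 1 := by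
  by_contra h
  rw [mem_Ioc, not_and_or, not_lt, not_le] at h
  apply hu
  unfold bangBangAcc
  rcases h with h | h <;> split_ifs <;> norm_num <;> linarith

section Concatenation

variable {E : Type*} [NormedAddCommGroup E] [NormedSpace ℝ E] (p : ℕ → E) (k : ℕ)

noncomputable def bangBangPath (u : ℝ) : E :=
  p 0 + ∑ j ∈ Finset.range k, bangBangPos (u - j) • (p (j + 1) - p j)

noncomputable def bangBangPathVel (u : ℝ) : E :=
  ∑ j ∈ Finset.range k, bangBangVel (u - j) • (p (j + 1) - p j)

noncomputable def bangBangPathAcc (u : ℝ) : E :=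
  ∑ j ∈ Finset.range k, bangBangAcc (u - j) • (p (j + 1) - p j)

theorem hasDerivAt_bangBangPath (u : ℝ) :
    HasDerivAt (bangBangPath p k) (bangBangPathVel p k u) u :=
  (HasDerivAt.fun_sum fun (j : ℕ) _ =>
    ((hasDerivAt_bangBangPos (u - j)).comp_sub_const u (j : ℝ)).smul_const
      (p (j + 1) - p j)).const_add (p 0)

theorem hasDerivAt_bangBangPathVel {u : ℝ} (hu : ∀ m ≤ 2 * k, u ≠ m / 2) :
    HasDerivAt (bangBangPathVel p k) (bangBangPathAcc p k u) u := by
  refine HasDerivAt.fun_sum fun j hj => ?_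
  have hj : j < k := Finset.mem_range.1 hj
  have h₀ : u - j ≠ 0 := fun h => hu (2 * j) (by omega) (by push_cast; linarith)
  have h₁ : u - j ≠ 1 / 2 := fun h => hu (2 * j + 1) (by omega) (by push_cast; linarith)
  have h₂ : u - j ≠ 1 := fun h => hu (2 * j + 2) (by omega) (by push_cast; linarith)
  exact ((hasDerivAt_bangBangVel h₀ h₁ h₂).comp_sub_const u (j : ℝ)).smul_const _

@[fun_prop]
theorem continuous_bangBangPathVel : Continuous (bangBangPathVel p k) := by
  unfold bangBangPathVel; fun_prop

theorem bangBangPath_of_nonpos {u : ℝ} (hu : u ≤ 0) : bangBangPath p k u = p 0 := by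
  rw [bangBangPath, Finset.sum_eq_zero fun j _ => ?_, add_zero]
  rw [bangBangPos_of_nonpos (by linarith [j.cast_nonneg (α := ℝ)]), zero_smul]

theorem bangBangPathVel_of_nonpos {u : ℝ} (hu : u ≤ 0) : bangBangPathVel p k u = 0 :=
  Finset.sum_eq_zero fun j _ => by
    rw [bangBangVel_of_nonpos (by linarith [j.cast_nonneg (α := ℝ)]), zero_smul]

theorem one_le_sub_natCast_of_lt {j m : ℕ} (hj : j < m) {u : ℝ} (hu : (m : ℝ) ≤ u) :
    1 ≤ u - j := by
  have : (j : ℝ) + 1 ≤ m := by exact_mod_cast hj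
  linarith

theorem bangBangPath_of_le {u : ℝ} (hu : (k : ℝ) ≤ u) : bangBangPath p k u = p k := by
  rw [bangBangPath, Finset.sum_congr rfl fun j hj => ?_, Finset.sum_range_sub, add_sub_cancel]
  rw [bangBangPos_of_one_le (one_le_sub_natCast_of_lt (Finset.mem_range.1 hj) hu), one_smul]

theorem bangBangPathVel_of_le {u : ℝ} (hu : (k : ℝ) ≤ u) : bangBangPathVel p k u = 0 :=
  Finset.sum_eq_zero fun j hj => by
    rw [bangBangVel_of_one_le (one_le_sub_natCast_of_lt (Finset.mem_range.1 hj) hu), zero_smul]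

theorem bangBangPath_eq_of_mem_Icc {m : ℕ} (hm : m < k) {u : ℝ} (hu : u ∈ Icc (m : ℝ) (m + 1)) :
    bangBangPath p k u = p m + bangBangPos (u - m) • (p (m + 1) - p m) := by
  have hpast : bangBangPath p m u = p m := bangBangPath_of_le p m hu.1
  have hfuture : ∀ j ∈ Finset.Ico (m + 1) k, bangBangPos (u - j) • (p (j + 1) - p j) = 0 := by
    intro j hj
    have : (m : ℝ) + 1 ≤ j := by exact_mod_cast (Finset.mem_Ico.1 hj).1
    rw [bangBangPos_of_nonpos (by linarith [hu.2]), zero_smul]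
  rw [bangBangPath] at hpast
  rw [bangBangPath, ← Finset.sum_range_add_sum_Ico _ hm, Finset.sum_eq_zero hfuture, add_zero,
    Finset.sum_range_succ, ← add_assoc, hpast]

theorem norm_bangBangPathAcc_le {B : ℝ} (hB₀ : 0 ≤ B) (hB : ∀ j < k, ‖p (j + 1) - p j‖ ≤ B)
    (u : ℝ) : ‖bangBangPathAcc p k u‖ ≤ 4 * B := by
  by_cases h : ∃ j ∈ Finset.range k, bangBangAcc (u - j) ≠ 0
  · obtain ⟨j, hj, hne⟩ := h
    have hother : ∀ i ∈ Finset.range k, i ≠ j → bangBangAcc (u - i) • (p (i + 1) - p i) = 0 := by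
      intro i _ hij
      refine smul_eq_zero_of_left (not_not.1 fun hi => hij ?_) _
      obtain ⟨hi₀, hi₁⟩ := mem_Ioc_of_bangBangAcc_ne_zero hi
      obtain ⟨hj₀, hj₁⟩ := mem_Ioc_of_bangBangAcc_ne_zero hne
      have : i < j + 1 := by exact_mod_cast (by linarith : (i : ℝ) < j + 1)
      have : j < i + 1 := by exact_mod_cast (by linarith : (j : ℝ) < i + 1)
      omega
    rw [bangBangPathAcc, Finset.sum_eq_single j hother (absurd hj), norm_smul, Real.norm_eq_abs]
    exact mul_le_mul (abs_bangBangAcc_le _) (hB j (Finset.mem_range.1 hj)) (norm_nonneg _)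
      (by norm_num)
  · push Not at h
    rw [bangBangPathAcc, Finset.sum_eq_zero fun j hj => by rw [h j hj, zero_smul], norm_zero]
    positivity

theorem exists_nat_lt_mem_Icc {k : ℕ} (hk : 0 < k) {u : ℝ} (hu : u ∈ Icc 0 (k : ℝ)) :
    ∃ m < k, u ∈ Icc (m : ℝ) (m + 1) := by
  refine ⟨min ⌊u⌋₊ (k - 1), by omega,
    (Nat.cast_le.2 (min_le_left _ _)).trans (Nat.floor_le hu.1), ?_⟩
  rcases le_total ⌊u⌋₊ (k - 1) with h | h
  · rw [min_eq_left h]; exact (Nat.lt_floor_add_one u).le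
  · rw [min_eq_right h, Nat.cast_sub hk, Nat.cast_one, sub_add_cancel]; exact hu.2

theorem image_bangBangPath (hk : 0 < k) :
    bangBangPath p k '' Icc 0 k = ⋃ j : Fin k, segment ℝ (p j) (p (j + 1)) := by
  ext x
  simp only [mem_image, mem_iUnion, segment_eq_image']
  constructor
  · rintro ⟨u, hu, rfl⟩
    obtain ⟨m, hm, hmu⟩ := exists_nat_lt_mem_Icc hk hu
    exact ⟨⟨m, hm⟩, _, bangBangPos_mem_Icc _, (bangBangPath_eq_of_mem_Icc p k hm hmu).symm⟩
  · rintro ⟨j, θ, hθ, rfl⟩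
    have hsurj : Icc 0 1 ⊆ bangBangPos '' Icc 0 1 := by
      simpa only [bangBangPos_of_nonpos le_rfl, bangBangPos_of_one_le le_rfl] using
        intermediate_value_Icc zero_le_one continuous_bangBangPos.continuousOn
    obtain ⟨s, hs, rfl⟩ := hsurj hθ
    have hjk : (j : ℝ) + 1 ≤ k := by exact_mod_cast j.isLt
    have hjs : (j : ℝ) + s ∈ Icc (j : ℝ) (j + 1) := ⟨by linarith [hs.1], by linarith [hs.2]⟩
    refine ⟨j + s, ⟨add_nonneg (Nat.cast_nonneg _) hs.1, by linarith [hs.2]⟩, ?_⟩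
    rw [bangBangPath_eq_of_mem_Icc p k j.isLt hjs, add_sub_cancel_left]

theorem norm_bangBangPathAcc_le_sq (u : ℝ) :
    ‖bangBangPathAcc p k u‖ ≤ (∑ j ∈ Finset.range k, ‖p (j + 1) - p j‖ + 1) ^ 2 := by
  set L := ∑ j ∈ Finset.range k, ‖p (j + 1) - p j‖
  have hL : 0 ≤ L := Finset.sum_nonneg fun _ _ => norm_nonneg _
  refine (norm_bangBangPathAcc_le p k hL (fun j hj => ?_) u).trans
    (by nlinarith [sq_nonneg (L - 1)])
  exact Finset.single_le_sum (f := fun j => ‖p (j + 1) - p j‖) (fun _ _ => norm_nonneg _)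
    (Finset.mem_range.2 hj)

end Concatenation

section Rescaling

variable {E : Type*} [NormedAddCommGroup E] [NormedSpace ℝ E]

theorem HasDerivAt.comp_div_const {f : ℝ → E} {f' : E} {t : ℝ} (S : ℝ)
    (hf : HasDerivAt f f' (t / S)) : HasDerivAt (fun s => f (s / S)) (S⁻¹ • f') t := by
  simpa [div_eq_inv_mul, Function.comp_def] using hf.scomp t ((hasDerivAt_id t).div_const S)

theorem image_comp_div_Icc {α : Type*} (f : ℝ → α) {S : ℝ} (hS : 0 < S) (a b : ℝ) :
    (fun t => f (t / S)) '' Icc (a * S) (b * S) = f '' Icc a b := by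
  have : (fun t => t / S) '' Icc (a * S) (b * S) = Icc a b := by
    simp_rw [div_eq_mul_inv]
    rw [image_mul_right_Icc' _ _ (inv_pos.2 hS), mul_inv_cancel_right₀ hS.ne',
      mul_inv_cancel_right₀ hS.ne']
  rw [← this, image_image]

end Rescaling

/-- Concatenation of bang-bang transforms along a piecewise-linear path with vertices
`Q 0, …, Q k`: there is an admissible control (`|a(t)ᵢ| ≤ 1`) whose trajectory steers
the `n`-dimensional double integrator from `(Q 0, 0)` to `(Q k, 0)`, whose configuration
image is exactly the union of the edge segments; consequently, if every edge lies in an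
open set `Cfree`, the whole state trajectory lies in `Xfree = {(q,v) : q ∈ Cfree}`. -/
theorem bang_bang_transform_concatenation
    (n k : ℕ) (hk : 0 < k) (Q : Fin (k + 1) → Fin n → ℝ) :
    ∃ (T : ℝ) (q v a : ℝ → Fin n → ℝ) (E : Set ℝ), 0 ≤ T ∧ E.Finite ∧
      (∀ t ∈ Set.Icc 0 T, ∀ i, |a t i| ≤ 1) ∧
      (∀ t ∈ Set.Icc 0 T, ∀ i, HasDerivAt (fun s => q s i) (v t i) t) ∧
      (∀ i, ContinuousOn (fun s => v s i) (Set.Icc 0 T)) ∧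
      (∀ t ∈ Set.Icc 0 T \ E, ∀ i, HasDerivAt (fun s => v s i) (a t i) t) ∧
      q 0 = Q 0 ∧ v 0 = 0 ∧ q T = Q (Fin.last k) ∧ v T = 0 ∧
      q '' Set.Icc 0 T
        = ⋃ j : Fin k, segment ℝ (Q j.castSucc) (Q j.succ) ∧
      (∀ Cfree : Set (Fin n → ℝ), IsOpen Cfree →
        (∀ j : Fin k, segment ℝ (Q j.castSucc) (Q j.succ) ⊆ Cfree) →
        ∀ t ∈ Set.Icc 0 T, q t ∈ Cfree) := by
  set p : ℕ → Fin n → ℝ := fun m => Q (Fin.clamp m k)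
  set S := ∑ j ∈ Finset.range k, ‖p (j + 1) - p j‖ + 1
  have hS : 0 < S := by positivity
  have himage : (fun t => bangBangPath p k (t / S)) '' Icc 0 (k * S)
      = ⋃ j : Fin k, segment ℝ (Q j.castSucc) (Q j.succ) := by
    rw [← zero_mul S, image_comp_div_Icc _ hS, image_bangBangPath p k hk]
    refine iUnion_congr fun j => ?_
    simp only [p, Fin.clamp, min_eq_left j.isLt.le, min_eq_left (Nat.succ_le_of_lt j.isLt)]
    rfl
  refine ⟨k * S, fun t => bangBangPath p k (t / S), fun t => S⁻¹ • bangBangPathVel p k (t / S),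
    fun t => (S ^ 2)⁻¹ • bangBangPathAcc p k (t / S), (fun m : ℕ => S * (m / 2)) '' Iic (2 * k),
    by positivity, (finite_Iic _).image _, fun t _ i => ?_,
    fun t _ => hasDerivAt_pi.1 ((hasDerivAt_bangBangPath p k _).comp_div_const S),
    fun i => Continuous.continuousOn (by fun_prop), fun t ht => hasDerivAt_pi.1 ?_,
    ?_, ?_, ?_, ?_, himage, fun C _ hC t ht => ?_⟩
  · refine (norm_le_pi_norm ((S ^ 2)⁻¹ • bangBangPathAcc p k (t / S)) i).trans ?_
    rw [norm_smul, norm_inv, norm_pow, Real.norm_of_nonneg hS.le]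
    exact inv_mul_le_one_of_le₀ (norm_bangBangPathAcc_le_sq p k _) (by positivity)
  · have hswitch : ∀ m ≤ 2 * k, t / S ≠ m / 2 := fun m hm h =>
      ht.2 ⟨m, hm, show S * (m / 2) = t by rw [← h, mul_div_cancel₀ _ hS.ne']⟩
    refine (((hasDerivAt_bangBangPathVel p k hswitch).comp_div_const S).const_smul
      S⁻¹).congr_deriv ?_
    rw [smul_smul, ← mul_inv, ← sq]
  · simp [bangBangPath_of_nonpos, p, Fin.clamp]
  · simp [bangBangPathVel_of_nonpos]
  · simp [mul_div_cancel_right₀ _ hS.ne', bangBangPath_of_le, p, Fin.clamp, Fin.last]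
  · simp [mul_div_cancel_right₀ _ hS.ne', bangBangPathVel_of_le]
  · obtain ⟨j, hj⟩ := mem_iUnion.1 (himage ▸ mem_image_of_mem _ ht)
    exact hC j hj
end
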